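/- (Gauge transformations of the Weierstrass representation in ℝ⁴.) Let U : ℂ → ℂ be smooth, let h : ℂ → ℂ be holomorphic (∂̄h = 0), and let ψ, φ : ℂ → ℂ² be smooth solutions of 𝒟ψ = 0 and 𝒟^∨φ = 0 for the potential U. Set U' = exp(conj(h) − h)·U, ψ' = (e^h ψ₁, e^{conj(h)} ψ₂) and φ' = (e^{−h} φ₁, e^{−conj(h)} φ₂). Then 𝒟'ψ' = 0 and (𝒟')^∨φ' = 0, where 𝒟', (𝒟')^∨ are the Dirac operators with potential U'. -/

import Mathlib

/-- The Wirtinger derivative `∂f = (1/2)(∂f/∂x − i ∂f/∂y)`. -/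
noncomputable def wDeriv (f : ℂ → ℂ) (z : ℂ) : ℂ :=
  (fderiv ℝ f z 1 - Complex.I * fderiv ℝ f z Complex.I) / 2

/-- The Wirtinger derivative `∂̄f = (1/2)(∂f/∂x + i ∂f/∂y)`. -/
noncomputable def wDerivBar (f : ℂ → ℂ) (z : ℂ) : ℂ :=
  (fderiv ℝ f z 1 + Complex.I * fderiv ℝ f z Complex.I) / 2

lemma fderiv_cexp_comp (f : ℂ → ℂ) (z : ℂ) (hf : DifferentiableAt ℝ f z) (v : ℂ) :
    fderiv ℝ (fun w => Complex.exp (f w)) z v = Complex.exp (f z) * fderiv ℝ f z v := by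
  have h1 : HasFDerivAt Complex.exp
      (((1 : ℂ →L[ℂ] ℂ).smulRight (Complex.exp (f z))).restrictScalars ℝ) (f z) :=
    (Complex.hasDerivAt_exp (f z)).hasFDerivAt.restrictScalars ℝ
  have h2 := (h1.comp z hf.hasFDerivAt).fderiv
  rw [show (fun w => Complex.exp (f w)) = Complex.exp ∘ f from rfl, h2]
  simp [mul_comm]

lemma fderiv_conj_comp (f : ℂ → ℂ) (z : ℂ) (hf : DifferentiableAt ℝ f z) (v : ℂ) :
    fderiv ℝ (fun w => starRingEnd ℂ (f w)) z v = starRingEnd ℂ (fderiv ℝ f z v) := by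
  have h1 : HasFDerivAt (fun w : ℂ => starRingEnd ℂ w)
      (Complex.conjCLE.toContinuousLinearMap) (f z) :=
    Complex.conjCLE.toContinuousLinearMap.hasFDerivAt
  have h2 := (h1.comp z hf.hasFDerivAt).fderiv
  rw [show (fun w => starRingEnd ℂ (f w)) = (fun w : ℂ => starRingEnd ℂ w) ∘ f from rfl, h2]
  simp

lemma wDeriv_mul (f g : ℂ → ℂ) (z : ℂ) (hf : DifferentiableAt ℝ f z)
    (hg : DifferentiableAt ℝ g z) :
    wDeriv (fun w => f w * g w) z = wDeriv f z * g z + f z * wDeriv g z := by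
  simp only [wDeriv, fderiv_fun_mul hf hg]
  simp only [ContinuousLinearMap.add_apply, ContinuousLinearMap.smul_apply, smul_eq_mul]
  ring

lemma wDerivBar_mul (f g : ℂ → ℂ) (z : ℂ) (hf : DifferentiableAt ℝ f z)
    (hg : DifferentiableAt ℝ g z) :
    wDerivBar (fun w => f w * g w) z = wDerivBar f z * g z + f z * wDerivBar g z := by
  simp only [wDerivBar, fderiv_fun_mul hf hg]
  simp only [ContinuousLinearMap.add_apply, ContinuousLinearMap.smul_apply, smul_eq_mul]
  ring

lemma wDeriv_exp (f : ℂ → ℂ) (z : ℂ) (hf : DifferentiableAt ℝ f z) :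
    wDeriv (fun w => Complex.exp (f w)) z = Complex.exp (f z) * wDeriv f z := by
  simp only [wDeriv, fderiv_cexp_comp f z hf]
  ring

lemma wDerivBar_exp (f : ℂ → ℂ) (z : ℂ) (hf : DifferentiableAt ℝ f z) :
    wDerivBar (fun w => Complex.exp (f w)) z = Complex.exp (f z) * wDerivBar f z := by
  simp only [wDerivBar, fderiv_cexp_comp f z hf]
  ring

lemma wDeriv_conj (f : ℂ → ℂ) (z : ℂ) (hf : DifferentiableAt ℝ f z) :
    wDeriv (fun w => starRingEnd ℂ (f w)) z = starRingEnd ℂ (wDerivBar f z) := by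
  simp only [wDeriv, wDerivBar, fderiv_conj_comp f z hf, map_div₀, map_add, map_mul,
    Complex.conj_I, map_ofNat]
  ring

lemma wDerivBar_conj (f : ℂ → ℂ) (z : ℂ) (hf : DifferentiableAt ℝ f z) :
    wDerivBar (fun w => starRingEnd ℂ (f w)) z = starRingEnd ℂ (wDeriv f z) := by
  simp only [wDeriv, wDerivBar, fderiv_conj_comp f z hf, map_div₀, map_sub, map_mul,
    Complex.conj_I, map_ofNat]
  ring

lemma wDeriv_neg (f : ℂ → ℂ) (z : ℂ) (hf : DifferentiableAt ℝ f z) :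
    wDeriv (fun w => -(f w)) z = -wDeriv f z := by
  simp only [wDeriv, fderiv_fun_neg]
  simp only [ContinuousLinearMap.neg_apply]
  ring

lemma wDerivBar_neg (f : ℂ → ℂ) (z : ℂ) (hf : DifferentiableAt ℝ f z) :
    wDerivBar (fun w => -(f w)) z = -wDerivBar f z := by
  simp only [wDerivBar, fderiv_fun_neg]
  simp only [ContinuousLinearMap.neg_apply]
  ring

/-- Gauge transformations of the Weierstrass representation in `ℝ⁴`:
if `h` is holomorphic, `𝒟ψ = 0` and `𝒟^∨φ = 0` for the potential `U`, then for
`U' = e^{h̄−h}U`, `ψ' = (e^hψ₁, e^{h̄}ψ₂)` and `φ' = (e^{−h}φ₁, e^{−h̄}φ₂)` one has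
`𝒟'ψ' = 0` and `(𝒟')^∨φ' = 0` with potential `U'`. -/
theorem weierstrass_gauge_transformation (U h : ℂ → ℂ) (ψ₁ ψ₂ φ₁ φ₂ : ℂ → ℂ)
    (hU : ContDiff ℝ (⊤ : ℕ∞) U) (hh : ContDiff ℝ (⊤ : ℕ∞) h)
    (hψ₁ : ContDiff ℝ (⊤ : ℕ∞) ψ₁) (hψ₂ : ContDiff ℝ (⊤ : ℕ∞) ψ₂)
    (hφ₁ : ContDiff ℝ (⊤ : ℕ∞) φ₁) (hφ₂ : ContDiff ℝ (⊤ : ℕ∞) φ₂)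
    (hhol : ∀ z : ℂ, wDerivBar h z = 0)
    (hψD₂ : ∀ z : ℂ, wDeriv ψ₂ z = -(U z) * ψ₁ z)
    (hψD₁ : ∀ z : ℂ, wDerivBar ψ₁ z = starRingEnd ℂ (U z) * ψ₂ z)
    (hφD₂ : ∀ z : ℂ, wDeriv φ₂ z = -(starRingEnd ℂ (U z)) * φ₁ z)
    (hφD₁ : ∀ z : ℂ, wDerivBar φ₁ z = U z * φ₂ z) :
    (∀ z : ℂ, wDeriv (fun w => Complex.exp (starRingEnd ℂ (h w)) * ψ₂ w) z
        = -(Complex.exp (starRingEnd ℂ (h z) - h z) * U z)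
            * (Complex.exp (h z) * ψ₁ z))
    ∧ (∀ z : ℂ, wDerivBar (fun w => Complex.exp (h w) * ψ₁ w) z
        = starRingEnd ℂ (Complex.exp (starRingEnd ℂ (h z) - h z) * U z)
            * (Complex.exp (starRingEnd ℂ (h z)) * ψ₂ z))
    ∧ (∀ z : ℂ, wDeriv (fun w => Complex.exp (-(starRingEnd ℂ (h w))) * φ₂ w) z
        = -(starRingEnd ℂ (Complex.exp (starRingEnd ℂ (h z) - h z) * U z))
            * (Complex.exp (-(h z)) * φ₁ z))
    ∧ (∀ z : ℂ, wDerivBar (fun w => Complex.exp (-(h w)) * φ₁ w) z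
        = Complex.exp (starRingEnd ℂ (h z) - h z) * U z
            * (Complex.exp (-(starRingEnd ℂ (h z))) * φ₂ z)) := by
  have hhd : Differentiable ℝ h := hh.differentiable (by simp)
  have hch : Differentiable ℝ (fun w => starRingEnd ℂ (h w)) :=
    Complex.conjCLE.differentiable.comp hhd
  have hnch : Differentiable ℝ (fun w => -(starRingEnd ℂ (h w))) := hch.neg
  have hnh : Differentiable ℝ (fun w => -(h w)) := hhd.neg
  have hexp : Differentiable ℝ (fun w : ℂ => Complex.exp w) :=
    (Complex.differentiable_exp (𝕜 := ℂ)).restrictScalars ℝ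
  have he1 : Differentiable ℝ (fun w => Complex.exp (starRingEnd ℂ (h w))) := hexp.comp hch
  have he2 : Differentiable ℝ (fun w => Complex.exp (h w)) := hexp.comp hhd
  have he3 : Differentiable ℝ (fun w => Complex.exp (-(starRingEnd ℂ (h w)))) := hexp.comp hnch
  have he4 : Differentiable ℝ (fun w => Complex.exp (-(h w))) := hexp.comp hnh
  refine ⟨fun z => ?_, fun z => ?_, fun z => ?_, fun z => ?_⟩
  · rw [wDeriv_mul _ _ z (he1 z) (hψ₂.differentiable (by simp) z),
      wDeriv_exp _ z (hch z), wDeriv_conj h z (hhd z), hhol z, map_zero, mul_zero,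
      zero_mul, zero_add, hψD₂ z, Complex.exp_sub]
    field_simp
  · rw [wDerivBar_mul _ _ z (he2 z) (hψ₁.differentiable (by simp) z),
      wDerivBar_exp _ z (hhd z), hhol z, mul_zero, zero_mul, zero_add, hψD₁ z,
      map_mul, ← Complex.exp_conj, map_sub, Complex.conj_conj, Complex.exp_sub]
    field_simp
  · rw [wDeriv_mul _ _ z (he3 z) (hφ₂.differentiable (by simp) z),
      wDeriv_exp _ z (hnch z), wDeriv_neg _ z (hch z), wDeriv_conj h z (hhd z), hhol z,
      map_zero, neg_zero, mul_zero, zero_mul, zero_add, hφD₂ z,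
      map_mul, ← Complex.exp_conj, map_sub, Complex.conj_conj, Complex.exp_sub,
      Complex.exp_neg, Complex.exp_neg]
    field_simp
  · rw [wDerivBar_mul _ _ z (he4 z) (hφ₁.differentiable (by simp) z),
      wDerivBar_exp _ z (hnh z), wDerivBar_neg _ z (hhd z), hhol z, neg_zero, mul_zero,
      zero_mul, zero_add, hφD₁ z, Complex.exp_sub, Complex.exp_neg, Complex.exp_neg]
    field_simp
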